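/- arXiv:1203.3030 — 5 statements merged into one kernel-verified Lean document; each statement's English description precedes it below -/
import Mathlib

section
/- For every integer n ≥ 4, t(n,3) ≤ 2n − 5; that is, there exists a 3-rainbow connected graph of order n with at most 2n − 5 edges. -/
/-- An edge-coloring with `k` colors (adjacent edges may receive the same color) is a
`k`-rainbow connected coloring if every two distinct vertices are joined by a path whose
edges all receive distinct colors; `G` is `k`-rainbow connected if such a coloring exists. -/
def IsRainbowConnected {V : Type*} (G : SimpleGraph V) (k : ℕ) : Prop :=
  ∃ c : Sym2 V → Fin k, ∀ u v : V, u ≠ v →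
    ∃ p : G.Walk u v, p.IsPath ∧ (p.edges.map c).Nodup

/-- `minRainbowEdges n d` is `t(n,d)`: the minimum number of edges among
all graphs of order `n` that are `d`-rainbow connected. -/
noncomputable def minRainbowEdges (n d : ℕ) : ℕ :=
  sInf {m | ∃ G : SimpleGraph (Fin n), G.edgeSet.ncard = m ∧ IsRainbowConnected G d}

namespace TUpper

def rrel {n : ℕ} (i j : Fin n) : Prop :=
  (i.val = 0 ∧ j.val = 1) ∨ (i.val = 0 ∧ 2 ≤ j.val ∧ j.val ≠ 3) ∨ (i.val = 1 ∧ 3 ≤ j.val)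

def GR (n : ℕ) : SimpleGraph (Fin n) := SimpleGraph.fromRel rrel

def col {n : ℕ} : Sym2 (Fin n) → Fin 3 :=
  Sym2.lift ⟨fun i j =>
    if (i.val = 0 ∧ j.val = 1) ∨ (j.val = 0 ∧ i.val = 1) then 0
    else if i.val = 0 ∨ j.val = 0 then 1 else 2,
    fun i j => by dsimp only; split_ifs <;> first | rfl | tauto⟩

lemma col_eq {n : ℕ} (i j : Fin n) : col s(i,j) =
    if (i.val = 0 ∧ j.val = 1) ∨ (j.val = 0 ∧ i.val = 1) then 0
    else if i.val = 0 ∨ j.val = 0 then 1 else 2 := rfl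

lemma adj_iff {n : ℕ} (i j : Fin n) : (GR n).Adj i j ↔ i ≠ j ∧ (rrel i j ∨ rrel j i) :=
  SimpleGraph.fromRel_adj rrel i j

lemma adj_of_rrel {n : ℕ} {i j : Fin n} (h : rrel i j) (hne : i.val ≠ j.val) :
    (GR n).Adj i j := (adj_iff i j).2 ⟨fun hc => hne (by rw [hc]), Or.inl h⟩

end TUpper

open TUpper in
/-- For every integer `n ≥ 4`, `t(n,3) ≤ 2n - 5`. -/
theorem t_n_three_upper (n : ℕ) (hn : 4 ≤ n) :
    (minRainbowEdges n 3 : ℤ) ≤ 2 * (n : ℤ) - 5 := by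
  have h0 : 0 < n := by omega
  have h1 : 1 < n := by omega
  have h2 : 2 < n := by omega
  have h3 : 3 < n := by omega
  -- adjacency helpers
  have hadj01 : (GR n).Adj ⟨0,h0⟩ ⟨1,h1⟩ :=
    adj_of_rrel (Or.inl ⟨rfl, rfl⟩) (show (0:ℕ) ≠ 1 by omega)
  have hadj0 : ∀ j : Fin n, 2 ≤ j.val → j.val ≠ 3 → (GR n).Adj ⟨0,h0⟩ j :=
    fun j hj hj3 => adj_of_rrel (Or.inr (Or.inl ⟨rfl, hj, hj3⟩)) (show (0:ℕ) ≠ j.val by omega)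
  have hadj1 : ∀ j : Fin n, 3 ≤ j.val → (GR n).Adj ⟨1,h1⟩ j :=
    fun j hj => adj_of_rrel (Or.inr (Or.inr ⟨rfl, hj⟩)) (show (1:ℕ) ≠ j.val by omega)
  -- color helpers
  have hc01 : col s((⟨0,h0⟩ : Fin n), ⟨1,h1⟩) = 0 := by
    rw [col_eq, if_pos]; left; exact ⟨rfl, rfl⟩
  have hc0 : ∀ j : Fin n, j.val ≠ 1 → col s((⟨0,h0⟩ : Fin n), j) = 1 := by
    intro j hj; rw [col_eq, if_neg, if_pos]
    · left; rfl
    · simp; omega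
  have hc1 : ∀ j : Fin n, j.val ≠ 0 → col s((⟨1,h1⟩ : Fin n), j) = 2 := by
    intro j hj; rw [col_eq, if_neg, if_neg]
    · simp; omega
    · simp; omega
  -- rainbow connectivity for ordered pairs
  have key : ∀ u v : Fin n, u.val < v.val →
      ∃ p : (GR n).Walk u v, p.IsPath ∧ (p.edges.map col).Nodup := by
    intro u v huv
    by_cases hu0 : u.val = 0
    · have hu : u = ⟨0,h0⟩ := Fin.ext hu0
      subst hu
      by_cases hv1 : v.val = 1
      · exact ⟨SimpleGraph.Walk.cons (by
          have : v = ⟨1,h1⟩ := Fin.ext hv1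
          rw [this]; exact hadj01) SimpleGraph.Walk.nil,
          by simp [SimpleGraph.Walk.isPath_def, Fin.ext_iff]; omega, by simp⟩
      · by_cases hv3 : v.val = 3
        · -- path 0 - 1 - v
          refine ⟨SimpleGraph.Walk.cons hadj01
            (SimpleGraph.Walk.cons (hadj1 v (by omega)) SimpleGraph.Walk.nil), ?_, ?_⟩
          · simp [SimpleGraph.Walk.isPath_def, Fin.ext_iff]; omega
          · simp [hc01, hc1 v (by omega)]
        · exact ⟨SimpleGraph.Walk.cons (hadj0 v (by omega) hv3) SimpleGraph.Walk.nil,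
            by simp [SimpleGraph.Walk.isPath_def, Fin.ext_iff]; omega, by simp⟩
    · by_cases hu1 : u.val = 1
      · have hu : u = ⟨1,h1⟩ := Fin.ext hu1
        subst hu
        by_cases hv2 : v.val = 2
        · -- path 1 - 0 - v
          refine ⟨SimpleGraph.Walk.cons hadj01.symm
            (SimpleGraph.Walk.cons (hadj0 v (by omega) (by omega)) SimpleGraph.Walk.nil), ?_, ?_⟩
          · simp [SimpleGraph.Walk.isPath_def, Fin.ext_iff]; omega
          · have e2 : col s((⟨1,h1⟩:Fin n), ⟨0,h0⟩) = 0 := by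
              rw [Sym2.eq_swap]; exact hc01
            simp [e2, hc0 v (by omega)]
        · exact ⟨SimpleGraph.Walk.cons (hadj1 v (by omega)) SimpleGraph.Walk.nil,
            by simp [SimpleGraph.Walk.isPath_def, Fin.ext_iff]; omega, by simp⟩
      · -- u.val ≥ 2, v.val ≥ 3
        have hu2 : 2 ≤ u.val := by omega
        by_cases hu3 : u.val = 3
        · -- path u - 1 - 0 - v  (v.val ≥ 4)
          refine ⟨SimpleGraph.Walk.cons (hadj1 u (by omega)).symm
            (SimpleGraph.Walk.cons hadj01.symm
              (SimpleGraph.Walk.cons (hadj0 v (by omega) (by omega)) SimpleGraph.Walk.nil)),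
            ?_, ?_⟩
          · simp [SimpleGraph.Walk.isPath_def, Fin.ext_iff]; omega
          · have e1 : col s(u, (⟨1,h1⟩:Fin n)) = 2 := by
              rw [Sym2.eq_swap]; exact hc1 u (by omega)
            have e2 : col s((⟨1,h1⟩:Fin n), ⟨0,h0⟩) = 0 := by
              rw [Sym2.eq_swap]; exact hc01
            simp [e1, e2, hc0 v (by omega)]
        · -- path u - 0 - 1 - v
          refine ⟨SimpleGraph.Walk.cons (hadj0 u hu2 hu3).symm
            (SimpleGraph.Walk.cons hadj01
              (SimpleGraph.Walk.cons (hadj1 v (by omega)) SimpleGraph.Walk.nil)),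
            ?_, ?_⟩
          · simp [SimpleGraph.Walk.isPath_def, Fin.ext_iff]; omega
          · have e1 : col s(u, (⟨0,h0⟩:Fin n)) = 1 := by
              rw [Sym2.eq_swap]; exact hc0 u (by omega)
            simp [e1, hc01, hc1 v (by omega)]
  have hrc : IsRainbowConnected (GR n) 3 := by
    refine ⟨col, fun u v huv => ?_⟩
    rcases lt_trichotomy u.val v.val with h | h | h
    · exact key u v h
    · exact absurd (Fin.ext h) huv
    · obtain ⟨p, hp, hnd⟩ := key v u h
      exact ⟨p.reverse, hp.reverse, by
        rw [SimpleGraph.Walk.edges_reverse, List.map_reverse, List.nodup_reverse]; exact hnd⟩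
  -- edge count
  have hcard : (GR n).edgeSet.ncard ≤ 2 * n - 5 := by
    classical
    set A : Finset (Fin n) := Finset.univ.filter (fun j => j.val ≠ 0 ∧ j.val ≠ 3) with hA
    set B : Finset (Fin n) := Finset.univ.filter (fun j => 3 ≤ j.val) with hB
    set T : Finset (Sym2 (Fin n)) :=
      A.image (fun j => s((⟨0,h0⟩ : Fin n), j)) ∪ B.image (fun j => s((⟨1,h1⟩ : Fin n), j)) with hT
    have hsub : (GR n).edgeSet ⊆ ↑T := by
      have haux : ∀ i j : Fin n, rrel i j → s(i, j) ∈ (↑T : Set (Sym2 (Fin n))) := by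
        intro i j hr
        rcases hr with ⟨hi, hj⟩ | ⟨hi, hj, hj3⟩ | ⟨hi, hj⟩ <;>
          simp only [hT, Finset.coe_union, Set.mem_union, Finset.coe_image, Set.mem_image,
            Finset.mem_coe, hA, hB, Finset.mem_filter, Finset.mem_univ, true_and]
        · exact Or.inl ⟨j, ⟨by omega, by omega⟩,
            by rw [show (⟨0,h0⟩:Fin n) = i from Fin.ext hi.symm]⟩
        · exact Or.inl ⟨j, ⟨by omega, by omega⟩,
            by rw [show (⟨0,h0⟩:Fin n) = i from Fin.ext hi.symm]⟩
        · exact Or.inr ⟨j, by omega,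
            by rw [show (⟨1,h1⟩:Fin n) = i from Fin.ext hi.symm]⟩
      intro e he
      induction e using Sym2.ind with
      | _ i j =>
        rw [SimpleGraph.mem_edgeSet, adj_iff] at he
        obtain ⟨hne, hr | hr⟩ := he
        · exact haux i j hr
        · rw [Sym2.eq_swap]; exact haux j i hr
    have hTcard : T.card ≤ 2 * n - 5 := by
      have hAcard : A.card ≤ n - 2 := by
        have : A ⊆ Finset.univ \ {⟨0,h0⟩, (⟨3,h3⟩ : Fin n)} := by
          intro x hx
          simp only [hA, Finset.mem_filter] at hx
          simp only [Finset.mem_sdiff, Finset.mem_univ, Finset.mem_insert,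
            Finset.mem_singleton, true_and, Fin.ext_iff]
          omega
        calc A.card ≤ _ := Finset.card_le_card this
          _ ≤ n - 2 := by
            rw [Finset.card_sdiff_of_subset (by simp)]
            have : ({⟨0,h0⟩, (⟨3,h3⟩ : Fin n)} : Finset (Fin n)).card = 2 := by
              rw [Finset.card_insert_of_notMem (by simp [Fin.ext_iff]), Finset.card_singleton]
            simp [this]
      have hBcard : B.card ≤ n - 3 := by
        have : B ⊆ Finset.univ \ {⟨0,h0⟩, ⟨1,h1⟩, (⟨2,h2⟩ : Fin n)} := by
          intro x hx
          simp only [hB, Finset.mem_filter] at hx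
          simp only [Finset.mem_sdiff, Finset.mem_univ, Finset.mem_insert,
            Finset.mem_singleton, true_and, Fin.ext_iff]
          omega
        calc B.card ≤ _ := Finset.card_le_card this
          _ ≤ n - 3 := by
            rw [Finset.card_sdiff_of_subset (by simp)]
            have : ({⟨0,h0⟩, ⟨1,h1⟩, (⟨2,h2⟩ : Fin n)} : Finset (Fin n)).card = 3 := by
              rw [Finset.card_insert_of_notMem (by simp [Fin.ext_iff]),
                Finset.card_insert_of_notMem (by simp [Fin.ext_iff]), Finset.card_singleton]
            simp [this]
      calc T.card ≤ _ + _ := Finset.card_union_le _ _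
        _ ≤ A.card + B.card := by gcongr <;> exact Finset.card_image_le
        _ ≤ (n - 2) + (n - 3) := by omega
        _ ≤ 2 * n - 5 := by omega
    calc (GR n).edgeSet.ncard ≤ (↑T : Set (Sym2 (Fin n))).ncard :=
          Set.ncard_le_ncard hsub (T.finite_toSet)
      _ = T.card := Set.ncard_coe_finset T
      _ ≤ 2 * n - 5 := hTcard
  have hle : minRainbowEdges n 3 ≤ (GR n).edgeSet.ncard :=
    Nat.sInf_le ⟨GR n, rfl, hrc⟩
  have : minRainbowEdges n 3 ≤ 2 * n - 5 := le_trans hle hcard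
  omega
end

section
/- For all integers n and d with 4 ≤ d < (n−1)/2, t(n,d) ≤ n − 1 + ⌈(n−2)/(d−2)⌉. -/
/-!
Write `n = N + 2` and `d = m + 2`. Join two hubs `u`, `v` by an edge and by `⌈N/m⌉` internally
disjoint paths carrying the other `N` vertices, at most `m` inner vertices on each; this graph has
`N + ⌈N/m⌉ + 1` edges. Colour `uv` with `0` and the `i`-th edge of each `u`–`v` path with `i`, so
that each such path closes with `uv` to a rainbow cycle. Two vertices on a common cycle are joined
along it. Inner vertices at positions `s ≤ t` of different paths are joined by walking back to `u`
(colours at most `s`), across `uv`, and from `v` back to the second vertex (colours above `t`).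
-/

open SimpleGraph

namespace SimpleGraph

variable {V C : Type*} {G : SimpleGraph V}

variable (G) in
def RainbowJoined (c : Sym2 V → C) (x y : V) : Prop :=
  ∃ p : G.Walk x y, p.IsPath ∧ (p.edges.map c).Nodup

theorem RainbowJoined.symm {c : Sym2 V → C} {x y : V} (h : G.RainbowJoined c x y) :
    G.RainbowJoined c y x := by
  obtain ⟨p, hp, hc⟩ := h
  exact ⟨p.reverse, hp.reverse, by simpa [Walk.edges_reverse] using hc⟩

theorem Walk.IsPath.append {x y z : V} {p : G.Walk x y} {q : G.Walk y z} (hp : p.IsPath)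
    (hq : q.IsPath) (hpq : ∀ w ∈ p.support, w ∈ q.support → w = y) : (p.append q).IsPath := by
  have hq' := hq.support_nodup
  rw [← Walk.cons_tail_support, List.nodup_cons] at hq'
  rw [Walk.isPath_def, Walk.support_append, List.nodup_append]
  refine ⟨hp.support_nodup, hq'.2, fun w hwp w' hwq hww' ↦ ?_⟩
  subst hww'
  exact hq'.1 (hpq w hwp (List.mem_of_mem_tail hwq) ▸ hwq)

theorem rainbowJoined_append {c : Sym2 V → C} {x y z : V} {p : G.Walk x y} {q : G.Walk y z}
    (hp : p.IsPath) (hq : q.IsPath) (hpc : (p.edges.map c).Nodup) (hqc : (q.edges.map c).Nodup)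
    (hpq : ∀ w ∈ p.support, w ∈ q.support → w = y)
    (hc : ∀ e ∈ p.edges, ∀ e' ∈ q.edges, c e ≠ c e') : G.RainbowJoined c x z := by
  refine ⟨p.append q, hp.append hq hpq, ?_⟩
  rw [Walk.edges_append, List.map_append, List.nodup_append]
  refine ⟨hpc, hqc, fun a ha b hb hab ↦ ?_⟩
  obtain ⟨e, he, rfl⟩ := List.mem_map.1 ha
  obtain ⟨e', he', rfl⟩ := List.mem_map.1 hb
  exact hc e he e' he' hab

theorem exists_isPath_along_of_injOn (c : Sym2 V → C) (f : ℕ → V) {s t : ℕ} (hst : s ≤ t)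
    (hadj : ∀ i ∈ Set.Ico s t, G.Adj (f i) (f (i + 1)))
    (hf : Set.InjOn f (Set.Icc s t))
    (hc : Set.InjOn (fun i ↦ c s(f i, f (i + 1))) (Set.Ico s t)) :
    ∃ p : G.Walk (f s) (f t), p.IsPath ∧ (p.edges.map c).Nodup ∧
      (∀ z ∈ p.support, z ∈ f '' Set.Icc s t) ∧
      ∀ e ∈ p.edges, e ∈ (fun i ↦ s(f i, f (i + 1))) '' Set.Ico s t := by
  induction t, hst using Nat.le_induction with
  | base => exact ⟨Walk.nil, by simp, by simp, by simp, by simp⟩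
  | succ t hst ih =>
    obtain ⟨p, hp, hpc, hps, hpe⟩ := ih (fun i hi ↦ hadj i ⟨hi.1, by grind⟩)
      (hf.mono (Set.Icc_subset_Icc_right (by omega)))
      (hc.mono (Set.Ico_subset_Ico_right (by omega)))
    have hnew : f (t + 1) ∉ p.support := by
      intro h
      obtain ⟨i, hi, hfi⟩ := hps _ h
      have := hf ⟨hi.1, by grind⟩ ⟨by omega, le_rfl⟩ hfi
      grind
    refine ⟨p.concat (hadj t ⟨hst, by omega⟩), hp.concat hnew _, ?_, ?_, ?_⟩
    · rw [Walk.edges_concat, List.map_concat, List.nodup_concat]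
      refine ⟨fun h ↦ ?_, hpc⟩
      obtain ⟨e, he, hce⟩ := List.mem_map.mp h
      obtain ⟨i, hi, rfl⟩ := hpe e he
      have := hc ⟨hi.1, by grind⟩ ⟨hst, by omega⟩ hce
      grind
    · intro z hz
      rw [Walk.support_concat, List.mem_append, List.mem_singleton] at hz
      rcases hz with hz | rfl
      · exact Set.image_mono (Set.Icc_subset_Icc_right (by omega)) (hps z hz)
      · exact ⟨t + 1, ⟨by omega, le_rfl⟩, rfl⟩
    · intro e he
      rw [Walk.edges_concat, List.concat_eq_append, List.mem_append, List.mem_singleton] at he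
      rcases he with he | rfl
      · exact Set.image_mono (Set.Ico_subset_Ico_right (by omega)) (hpe e he)
      · exact ⟨t, ⟨hst, by omega⟩, rfl⟩

end SimpleGraph

namespace ThetaGraph

def u (N : ℕ) : Fin (N + 2) := ⟨N, by omega⟩

def v (N : ℕ) : Fin (N + 2) := ⟨N + 1, by omega⟩

def len (m N b : ℕ) : ℕ := min m (N - m * b)

/-- The `b`-th cycle read from `u`: `u` at `i = 0`, the inner vertices
`m * b, …, m * b + len m N b - 1` at `1 ≤ i ≤ len m N b`, and `v` from `len m N b + 1` on. -/
def vertex (m N b i : ℕ) : Fin (N + 2) :=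
  if hi : i = 0 then u N
  else if h : i ≤ len m N b then ⟨m * b + (i - 1), by unfold len at h; omega⟩ else v N

/-- The index of a vertex on its cycle, with `v` placed above all inner vertices, so that
`cycleEdge m N b i` gets colour `i + 1`. -/
def height (m N : ℕ) (x : Fin (N + 2)) : ℕ :=
  if x.val < N then x.val % m + 1 else if x.val = N then 0 else m + 1

def color (m N : ℕ) (e : Sym2 (Fin (N + 2))) : Fin (m + 2) :=
  if e = s(u N, v N) then 0 else Fin.ofNat (m + 2) ((e.map (height m N)).inf + 1)

def cycleEdge (m N b i : ℕ) : Sym2 (Fin (N + 2)) := s(vertex m N b i, vertex m N b (i + 1))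

/-- The first edge of the `b`-th cycle is listed via `b`, every later one via its inner
endpoint nearest to `u`; hence at most `1 + ⌈N/m⌉ + N` edges. -/
def edges (m N : ℕ) : Finset (Sym2 (Fin (N + 2))) :=
  insert s(u N, v N) ((Finset.range (N ⌈/⌉ m)).image (cycleEdge m N · 0) ∪
    (Finset.range N).image fun a ↦ cycleEdge m N (a / m) (a % m + 1))

end ThetaGraph

open ThetaGraph

def thetaGraph (m N : ℕ) : SimpleGraph (Fin (N + 2)) := fromEdgeSet (edges m N)

namespace ThetaGraph

variable {m N b i : ℕ}

theorem len_le : len m N b ≤ m := min_le_left _ _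

theorem vertex_zero : vertex m N b 0 = u N := rfl

theorem vertex_of_len_lt (h : len m N b < i) : vertex m N b i = v N := by
  rw [vertex, dif_neg (by omega), dif_neg (by omega)]

theorem val_vertex (h1 : 1 ≤ i) (h2 : i ≤ len m N b) : (vertex m N b i).val = m * b + (i - 1) := by
  rw [vertex, dif_neg (by omega), dif_pos h2]

theorem val_vertex_lt (h1 : 1 ≤ i) (h2 : i ≤ len m N b) : (vertex m N b i).val < N := by
  rw [val_vertex h1 h2]; unfold len at h2; omega

theorem height_vertex (h : i ≤ len m N b) : height m N (vertex m N b i) = i := by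
  rcases Nat.eq_zero_or_pos i with rfl | hi
  · simp [vertex_zero, height, u]
  · have hlt := val_vertex_lt hi h
    rw [height, if_pos hlt, val_vertex hi h, Nat.mul_add_mod,
      Nat.mod_eq_of_lt (by have := @len_le m N b; omega)]
    omega

theorem height_v : height m N (v N) = m + 1 := by simp [height, v]

theorem vertex_injOn : Set.InjOn (vertex m N b) (Set.Iic (len m N b + 1)) := by
  have key : ∀ j ≤ len m N b + 1,
      height m N (vertex m N b j) = if j ≤ len m N b then j else m + 1 := by
    intro j hj
    split_ifs with h
    · exact height_vertex h
    · rw [vertex_of_len_lt (by omega), height_v]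
  intro i hi j hj hij
  have hheight := key i hi
  rw [hij, key j hj] at hheight
  have := @len_le m N b
  simp only [Set.mem_Iic] at hi hj
  split_ifs at hheight <;> omega

theorem vertex_eq_vertex_iff {j : ℕ} (hi : i ≤ len m N b + 1) (hj : j ≤ len m N b + 1) :
    vertex m N b i = vertex m N b j ↔ i = j :=
  ⟨fun h ↦ vertex_injOn hi hj h, congrArg _⟩

theorem vertex_ne_vertex_of_ne {A B j : ℕ} (hAB : A ≠ B) (hi1 : 1 ≤ i) (hi : i ≤ len m N A)
    (hj1 : 1 ≤ j) : vertex m N A i ≠ vertex m N B j := by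
  intro h
  have hiN := val_vertex_lt hi1 hi
  by_cases hj : j ≤ len m N B
  · have hm : 0 < m := by have := @len_le m N A; omega
    have hdiv : ∀ a k, k < m → (m * a + k) / m = a := fun a k hk ↦ by
      rw [Nat.mul_add_div hm, Nat.div_eq_of_lt hk, add_zero]
    have hval := congrArg Fin.val h
    rw [val_vertex hi1 hi, val_vertex hj1 hj] at hval
    have := @len_le m N A
    have := @len_le m N B
    exact hAB (by rw [← hdiv A (i - 1) (by omega), hval, hdiv B (j - 1) (by omega)])
  · rw [h, vertex_of_len_lt (by omega)] at hiN
    simp [v] at hiN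

theorem val_color_cycleEdge (hb : 0 < len m N b) (hi : i ≤ len m N b) :
    (color m N (cycleEdge m N b i)).val = i + 1 := by
  have hne : cycleEdge m N b i ≠ s(u N, v N) := by
    rw [cycleEdge, ← vertex_zero (m := m) (b := b), ← vertex_of_len_lt (lt_add_one (len m N b)),
      ne_eq, Sym2.eq_iff]
    rintro (⟨h1, h2⟩ | ⟨h1, h2⟩)
    · have := (vertex_eq_vertex_iff (by omega) (by omega)).1 h1
      have := (vertex_eq_vertex_iff (by omega) (by omega)).1 h2
      omega
    · have := (vertex_eq_vertex_iff (by omega) (by omega)).1 h2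
      omega
  have hnext : i ≤ height m N (vertex m N b (i + 1)) := by
    by_cases h : i + 1 ≤ len m N b
    · rw [height_vertex h]; omega
    · rw [vertex_of_len_lt (by omega), height_v]; have := @len_le m N b; omega
  rw [color, if_neg hne, cycleEdge, Sym2.map_mk, Sym2.inf_mk, height_vertex hi, Fin.val_ofNat,
    inf_eq_left.2 hnext, Nat.mod_eq_of_lt (by have := @len_le m N b; omega)]

theorem lt_ceilDiv_of_len_pos (hb : 0 < len m N b) : b < N ⌈/⌉ m := by
  have hm : 0 < m := by have := @len_le m N b; omega
  rw [← not_le, ceilDiv_le_iff_le_smul hm, smul_eq_mul]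
  unfold len at hb
  omega

theorem adj_vertex_succ (hb : 0 < len m N b) (hi : i ≤ len m N b) :
    (thetaGraph m N).Adj (vertex m N b i) (vertex m N b (i + 1)) := by
  rw [thetaGraph, fromEdgeSet_adj]
  refine ⟨?_, fun h ↦ by have := (vertex_eq_vertex_iff (by omega) (by omega)).1 h; omega⟩
  change cycleEdge m N b i ∈ (edges m N : Set _)
  rw [Finset.mem_coe, edges, Finset.mem_insert, Finset.mem_union, Finset.mem_image,
    Finset.mem_image]
  right
  rcases Nat.eq_zero_or_pos i with rfl | hi1
  · exact Or.inl ⟨b, Finset.mem_range.2 (lt_ceilDiv_of_len_pos hb), rfl⟩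
  · have := @len_le m N b
    have hdiv : (m * b + (i - 1)) / m = b ∧ (m * b + (i - 1)) % m = i - 1 :=
      (Nat.div_mod_unique (by omega)).2 ⟨by ring, by omega⟩
    refine Or.inr ⟨m * b + (i - 1), Finset.mem_range.2 (by unfold len at hi; omega), ?_⟩
    rw [hdiv.1, hdiv.2, Nat.sub_add_cancel hi1]

theorem exists_isPath_along_cycle {s t : ℕ} (hb : 0 < len m N b) (hst : s ≤ t)
    (ht : t ≤ len m N b + 1) :
    ∃ p : (thetaGraph m N).Walk (vertex m N b s) (vertex m N b t), p.IsPath ∧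
      (p.edges.map (color m N)).Nodup ∧ (∀ z ∈ p.support, z ∈ vertex m N b '' Set.Icc s t) ∧
      ∀ e ∈ p.edges, (color m N e).val ∈ Set.Icc (s + 1) t := by
  obtain ⟨p, hp, hpc, hps, hpe⟩ := exists_isPath_along_of_injOn (color m N) (vertex m N b) hst
    (fun i hi ↦ adj_vertex_succ hb (by grind))
    (vertex_injOn.mono fun i hi ↦ by simp only [Set.mem_Icc, Set.mem_Iic] at hi ⊢; omega)
    (fun i hi j hj hij ↦ by
      have hval := congrArg Fin.val hij
      simp only [Set.mem_Ico] at hi hj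
      change (color m N (cycleEdge m N b i)).val = (color m N (cycleEdge m N b j)).val at hval
      rw [val_color_cycleEdge hb (by omega), val_color_cycleEdge hb (by omega)] at hval
      omega)
  refine ⟨p, hp, hpc, hps, fun e he ↦ ?_⟩
  obtain ⟨i, hi, rfl⟩ := hpe e he
  simp only [Set.mem_Ico] at hi
  change (color m N (cycleEdge m N b i)).val ∈ _
  rw [val_color_cycleEdge hb (by omega), Set.mem_Icc]
  omega

theorem rainbowJoined_of_mem_cycle {s t : ℕ} (hb : 0 < len m N b) (hs : s ≤ len m N b + 1)
    (ht : t ≤ len m N b + 1) :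
    (thetaGraph m N).RainbowJoined (color m N) (vertex m N b s) (vertex m N b t) := by
  rcases le_total s t with hst | hts
  · obtain ⟨p, hp, hpc, -⟩ := exists_isPath_along_cycle hb hst ht
    exact ⟨p, hp, hpc⟩
  · obtain ⟨p, hp, hpc, -⟩ := exists_isPath_along_cycle hb hts hs
    exact RainbowJoined.symm ⟨p, hp, hpc⟩

theorem adj_u_v : (thetaGraph m N).Adj (u N) (v N) := by
  rw [thetaGraph, fromEdgeSet_adj]
  exact ⟨Finset.mem_insert_self _ _, by simp [u, v, Fin.ext_iff]⟩

theorem rainbowJoined_of_ne {A B s t : ℕ} (hA : 0 < len m N A) (hB : 0 < len m N B)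
    (hAB : A ≠ B) (hs : 1 ≤ s) (hst : s ≤ t) (hsA : s ≤ len m N A) (htB : t ≤ len m N B) :
    (thetaGraph m N).RainbowJoined (color m N) (vertex m N A s) (vertex m N B t) := by
  have hp := exists_isPath_along_cycle hA (Nat.zero_le s) (by omega : s ≤ len m N A + 1)
  rw [vertex_zero] at hp
  obtain ⟨p, hp, hpc, hps, hpe⟩ := hp
  have hq := exists_isPath_along_cycle hB (by omega : t ≤ len m N B + 1) le_rfl
  rw [vertex_of_len_lt (lt_add_one _)] at hq
  obtain ⟨q, hq, hqc, hqs, hqe⟩ := hq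
  have hu : u N ∉ q.support := fun h ↦ by
    obtain ⟨j, hj, hju⟩ := hqs _ h
    simp only [Set.mem_Icc] at hj
    have := (vertex_eq_vertex_iff (by omega) (by omega)).1 (hju.trans vertex_zero.symm)
    omega
  have h0 : color m N s(u N, v N) = 0 := if_pos rfl
  refine rainbowJoined_append hp.reverse
    ((Walk.cons_isPath_iff adj_u_v q.reverse).2 ⟨hq.reverse, by simpa using hu⟩)
    (by simpa [Walk.edges_reverse] using hpc) ?_ ?_ ?_
  · rw [Walk.edges_cons, List.map_cons, List.nodup_cons, h0, Walk.edges_reverse, List.map_reverse,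
      List.nodup_reverse, List.mem_reverse]
    refine ⟨fun h ↦ ?_, hqc⟩
    obtain ⟨e, he, hce⟩ := List.mem_map.1 h
    simpa [hce] using hqe e he
  · intro w hwp hwq
    rw [Walk.support_reverse, List.mem_reverse] at hwp
    obtain ⟨i, hi, rfl⟩ := hps w hwp
    simp only [Set.mem_Icc] at hi
    rcases Nat.eq_zero_or_pos i with rfl | hi1
    · rfl
    rw [Walk.support_cons, Walk.support_reverse, List.mem_cons, List.mem_reverse] at hwq
    rcases hwq with hwu | hwq
    · have := (vertex_eq_vertex_iff (by omega) (by omega)).1 (hwu.trans vertex_zero.symm)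
      omega
    · obtain ⟨j, hj, hji⟩ := hqs _ hwq
      simp only [Set.mem_Icc] at hj
      exact absurd hji.symm (vertex_ne_vertex_of_ne hAB hi1 (by omega) (by omega))
  · intro e he e' he' hee'
    rw [Walk.edges_reverse, List.mem_reverse] at he
    have hpe' := hpe e he
    rw [Walk.edges_cons, Walk.edges_reverse, List.mem_cons, List.mem_reverse] at he'
    rcases he' with rfl | he'
    · rw [hee', h0] at hpe'
      simp at hpe'
    · have hqe' := hqe e' he'
      rw [← hee'] at hqe'
      simp only [Set.mem_Icc] at hpe' hqe'
      omega

theorem exists_eq_vertex (hm : 0 < m) (x : Fin (N + 2)) (hx : x.val < N) :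
    ∃ b, 0 < len m N b ∧ ∃ i, 1 ≤ i ∧ i ≤ len m N b ∧ vertex m N b i = x := by
  have hdm := Nat.div_add_mod x.val m
  have hmod := Nat.mod_lt x.val hm
  have hlen : x.val % m + 1 ≤ len m N (x.val / m) := by
    unfold len
    generalize m * (x.val / m) = k at hdm ⊢
    omega
  refine ⟨x.val / m, by omega, x.val % m + 1, by omega, hlen, Fin.ext ?_⟩
  rw [val_vertex (by omega) hlen]
  omega

theorem exists_eq_vertex_of_le (x : Fin (N + 2)) (hx : N ≤ x.val) (b : ℕ) :
    ∃ i ≤ len m N b + 1, vertex m N b i = x := by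
  rcases (show x.val = N ∨ x.val = N + 1 by omega) with hxu | hxv
  · exact ⟨0, by omega, Fin.ext hxu.symm⟩
  · exact ⟨len m N b + 1, le_rfl, (vertex_of_len_lt (lt_add_one _)).trans (Fin.ext hxv.symm)⟩

end ThetaGraph

theorem isRainbowConnected_thetaGraph {m N : ℕ} (hm : 0 < m) (hN : 0 < N) :
    IsRainbowConnected (thetaGraph m N) (m + 2) := by
  refine ⟨color m N, fun x y _ ↦ ?_⟩
  rcases lt_or_ge x.val N with hx | hx <;> rcases lt_or_ge y.val N with hy | hy
  · obtain ⟨A, hA, s, hs1, hs, rfl⟩ := exists_eq_vertex hm x hx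
    obtain ⟨B, hB, t, ht1, ht, rfl⟩ := exists_eq_vertex hm y hy
    obtain rfl | hAB := eq_or_ne A B
    · exact rainbowJoined_of_mem_cycle hA (by omega) (by omega)
    rcases le_total s t with hst | hts
    · exact rainbowJoined_of_ne hA hB hAB hs1 hst hs ht
    · exact (rainbowJoined_of_ne hB hA hAB.symm ht1 hts ht hs).symm
  · obtain ⟨A, hA, s, -, hs, rfl⟩ := exists_eq_vertex hm x hx
    obtain ⟨t, ht, rfl⟩ := exists_eq_vertex_of_le (m := m) y hy A
    exact rainbowJoined_of_mem_cycle hA (by omega) ht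
  · obtain ⟨B, hB, t, -, ht, rfl⟩ := exists_eq_vertex hm y hy
    obtain ⟨s, hs, rfl⟩ := exists_eq_vertex_of_le (m := m) x hx B
    exact rainbowJoined_of_mem_cycle hB hs (by omega)
  · have hlen : 0 < len m N 0 := by rw [len, mul_zero, Nat.sub_zero]; omega
    obtain ⟨s, hs, rfl⟩ := exists_eq_vertex_of_le (m := m) x hx 0
    obtain ⟨t, ht, rfl⟩ := exists_eq_vertex_of_le (m := m) y hy 0
    exact rainbowJoined_of_mem_cycle hlen hs ht

theorem ncard_edgeSet_thetaGraph_le (m N : ℕ) :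
    (thetaGraph m N).edgeSet.ncard ≤ N + N ⌈/⌉ m + 1 := by
  have hcard : (edges m N).card ≤ N + N ⌈/⌉ m + 1 := by
    have h0 := Finset.card_insert_le s(u N, v N) ((Finset.range (N ⌈/⌉ m)).image
      (cycleEdge m N · 0) ∪ (Finset.range N).image fun a ↦ cycleEdge m N (a / m) (a % m + 1))
    have hunion := Finset.card_union_le ((Finset.range (N ⌈/⌉ m)).image (cycleEdge m N · 0))
      ((Finset.range N).image fun a ↦ cycleEdge m N (a / m) (a % m + 1))
    have h1 := (Finset.range (N ⌈/⌉ m)).card_image_le (f := (cycleEdge m N · 0))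
    have h2 := (Finset.range N).card_image_le (f := fun a ↦ cycleEdge m N (a / m) (a % m + 1))
    rw [Finset.card_range] at h1 h2
    rw [edges]
    omega
  rw [thetaGraph, edgeSet_fromEdgeSet]
  exact (Set.ncard_le_ncard Set.sdiff_subset (Finset.finite_toSet _)).trans
    ((Set.ncard_coe_finset _).trans_le hcard)

theorem natCast_ceilDiv_le_ceil_div {m : ℕ} (hm : 0 < m) (N : ℕ) :
    ((N ⌈/⌉ m : ℕ) : ℤ) ≤ ⌈(N : ℚ) / m⌉ := by
  rw [Int.le_ceil_iff, lt_div_iff₀ (by exact_mod_cast hm)]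
  have h : N ⌈/⌉ m * m ≤ N + m - 1 := Nat.div_mul_le_self _ _
  have h' : ((N ⌈/⌉ m * m : ℕ) : ℚ) ≤ ((N + m - 1 : ℕ) : ℚ) := by exact_mod_cast h
  push_cast [Nat.cast_sub (show 1 ≤ N + m by omega)] at h'
  push_cast
  linarith

theorem minRainbowEdges_le {n d : ℕ} (G : SimpleGraph (Fin n)) (hG : IsRainbowConnected G d) :
    minRainbowEdges n d ≤ G.edgeSet.ncard :=
  Nat.sInf_le ⟨G, rfl, hG⟩

/-- For `4 ≤ d < (n-1)/2`, `t(n,d) ≤ n - 1 + ⌈(n-2)/(d-2)⌉`. -/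
theorem t_upper_of_four_le (n d : ℕ) (hd : 4 ≤ d) (hdn : 2 * d + 1 < n) :
    (minRainbowEdges n d : ℤ) ≤
      (n : ℤ) - 1 + ⌈((n : ℚ) - 2) / ((d : ℚ) - 2)⌉ := by
  obtain ⟨m, rfl⟩ : ∃ m, d = m + 2 := ⟨d - 2, by omega⟩
  obtain ⟨N, rfl⟩ : ∃ N, n = N + 2 := ⟨n - 2, by omega⟩
  have hmin : minRainbowEdges (N + 2) (m + 2) ≤ N + N ⌈/⌉ m + 1 :=
    (minRainbowEdges_le _ (isRainbowConnected_thetaGraph (by omega) (by omega))).trans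
      (ncard_edgeSet_thetaGraph_le m N)
  have hceil := natCast_ceilDiv_le_ceil_div (show 0 < m by omega) N
  push_cast at hceil ⊢
  rw [add_sub_cancel_right, add_sub_cancel_right]
  omega
end

section
/- For all integers n and d with n/2 ≤ d ≤ n − 2, t(n,d) = n; that is, the minimum number of edges of a d-rainbow connected graph of order n is exactly n. -/
open SimpleGraph

section RainbowConnected

variable {V : Type*} {G : SimpleGraph V} {k : ℕ}

theorem isRainbowConnected_iff_exists_walk :
    IsRainbowConnected G k ↔
      ∃ c : Sym2 V → Fin k, ∀ u v : V, u ≠ v → ∃ p : G.Walk u v, (p.edges.map c).Nodup := by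
  classical
  refine ⟨fun ⟨c, hc⟩ ↦ ⟨c, fun u v huv ↦ ?_⟩, fun ⟨c, hc⟩ ↦ ⟨c, fun u v huv ↦ ?_⟩⟩
  · obtain ⟨p, -, hp⟩ := hc u v huv
    exact ⟨p, hp⟩
  · obtain ⟨p, hp⟩ := hc u v huv
    exact ⟨p.bypass, p.bypass_isPath, hp.sublist (p.edges_bypass_sublist_edges.map c)⟩

namespace IsRainbowConnected

theorem mono {k' : ℕ} (h : IsRainbowConnected G k) (hk : k ≤ k') : IsRainbowConnected G k' := by
  obtain ⟨c, hc⟩ := h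
  refine ⟨Fin.castLE hk ∘ c, fun u v huv ↦ ?_⟩
  obtain ⟨p, hp, hnodup⟩ := hc u v huv
  exact ⟨p, hp, by simpa [← List.map_map] using hnodup.map (Fin.castLE_injective hk)⟩

theorem preconnected (h : IsRainbowConnected G k) : G.Preconnected := by
  obtain ⟨c, hc⟩ := h
  intro u v
  by_cases huv : u = v
  · exact huv ▸ .rfl
  · obtain ⟨p, -⟩ := hc u v huv
    exact p.reachable

end IsRainbowConnected

namespace SimpleGraph

theorem exists_not_reachable_of_not_reachable {a b x y : V} (hab : ¬G.Reachable a b)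
    (hxy : G.Reachable x y) : ∃ u, (u = a ∨ u = b) ∧ ¬G.Reachable u x ∧ ¬G.Reachable u y := by
  by_cases hax : G.Reachable a x
  · exact ⟨b, .inr rfl, fun hbx ↦ hab (hax.trans hbx.symm),
      fun hby ↦ hab (hax.trans (hxy.trans hby.symm))⟩
  · exact ⟨a, .inl rfl, hax, fun hay ↦ hax (hay.trans hxy.symm)⟩

theorem eq_of_isBridge_of_nodup_map_edges {α : Type*} {c : Sym2 V → α}
    (hc : ∀ u v : V, u ≠ v → ∃ p : G.Walk u v, (p.edges.map c).Nodup) {e f : Sym2 V}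
    (he : e ∈ G.edgeSet) (hf : f ∈ G.edgeSet) (hbe : G.IsBridge e) (hbf : G.IsBridge f)
    (hef : c e = c f) : e = f := by
  by_contra hne
  induction e using Sym2.ind with | _ a b =>
  induction f using Sym2.ind with | _ x y =>
  have hxy : (G.deleteEdges {s(a, b)}).Reachable x y :=
    (deleteEdges_adj.2 ⟨hf, by simpa using Ne.symm hne⟩).reachable
  have hab : (G.deleteEdges {s(x, y)}).Reachable a b :=
    (deleteEdges_adj.2 ⟨he, by simpa using hne⟩).reachable
  obtain ⟨u, hu, hux, huy⟩ := exists_not_reachable_of_not_reachable (isBridge_iff.1 hbe) hxy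
  obtain ⟨v, hv, hva, hvb⟩ := exists_not_reachable_of_not_reachable (isBridge_iff.1 hbf) hab
  have hsep_e : ¬(G.deleteEdges {s(a, b)}).Reachable u v := by
    rcases hv with rfl | rfl <;> assumption
  have hsep_f : ¬(G.deleteEdges {s(x, y)}).Reachable u v := by
    rcases hu with rfl | rfl <;> rwa [reachable_comm]
  obtain ⟨p, hp⟩ := hc u v fun huv ↦ hsep_e (huv ▸ .rfl)
  exact hne <| List.inj_on_of_nodup_map hp (p.mem_edges_of_not_reachable_deleteEdges hsep_e)
    (p.mem_edges_of_not_reachable_deleteEdges hsep_f) hef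

end SimpleGraph

theorem IsRainbowConnected.card_vert_le_card_edgeSet [Finite V] (h : IsRainbowConnected G k)
    (hk : k + 2 ≤ Nat.card V) : Nat.card V ≤ Nat.card G.edgeSet := by
  obtain ⟨c, hc⟩ := isRainbowConnected_iff_exists_walk.1 h
  have : Nonempty V := Nat.card_pos_iff.1 (by omega) |>.1
  have hconn : G.Connected := ⟨h.preconnected⟩
  have hlow := hconn.card_vert_le_card_edgeSet_add_one
  by_contra! hlt
  have hbridge := isAcyclic_iff_forall_isBridge.1
    (isTree_iff_connected_and_card.2 ⟨hconn, by omega⟩).isAcyclic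
  have hinj : Set.InjOn c G.edgeSet := fun e he f hf ↦
    eq_of_isBridge_of_nodup_map_edges hc he hf (hbridge he) (hbridge hf)
  have := Nat.card_le_card_of_injective _ (Set.injOn_iff_injective.1 hinj)
  rw [Nat.card_eq_fintype_card (α := Fin k), Fintype.card_fin] at this
  omega

end RainbowConnected

theorem Nat.mod_eq_or_mod_add_eq {a m : ℕ} (h : a < 2 * m) : a % m = a ∨ a % m + m = a := by
  rcases lt_or_ge a m with ham | ham
  · exact .inl (Nat.mod_eq_of_lt ham)
  · rw [Nat.mod_eq_sub_mod ham, Nat.mod_eq_of_lt (by omega)]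
    omega

theorem Nat.injOn_add_mod_mod {n m u k : ℕ} (hnm : n ≤ 2 * m) (hk : k + m ≤ n) (hu : u < n) :
    Set.InjOn (fun t ↦ (u + t) % n % m) (Set.Iio k) := by
  intro t₁ ht₁ t₂ ht₂ h
  simp only [Set.mem_Iio] at ht₁ ht₂ h
  -- each reduction subtracts its modulus at most once, which makes the claim linear
  have := Nat.mod_lt (u + t₁) (by omega : 0 < n)
  have := Nat.mod_lt (u + t₂) (by omega : 0 < n)
  have := Nat.mod_eq_or_mod_add_eq (a := u + t₁) (m := n) (by omega)
  have := Nat.mod_eq_or_mod_add_eq (a := u + t₂) (m := n) (by omega)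
  have := Nat.mod_eq_or_mod_add_eq (a := (u + t₁) % n) (m := m) (by omega)
  have := Nat.mod_eq_or_mod_add_eq (a := (u + t₂) % n) (m := m) (by omega)
  omega

namespace SimpleGraph

open Fin.CommRing

variable {n : ℕ} [NeZero n]

theorem cycleGraph_adj_iff (hn : 2 ≤ n) {u v : Fin n} :
    (cycleGraph n).Adj u v ↔ v = u + 1 ∨ u = v + 1 := by
  obtain ⟨n, rfl⟩ := Nat.exists_eq_add_of_le' hn
  rw [cycleGraph_adj, sub_eq_iff_eq_add', sub_eq_iff_eq_add', or_comm]

theorem edgeSet_cycleGraph (hn : 2 ≤ n) :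
    (cycleGraph n).edgeSet = Set.range fun i ↦ s(i, i + 1) := by
  ext e
  induction e using Sym2.ind with | _ u v =>
  simp only [mem_edgeSet, cycleGraph_adj_iff hn, Set.mem_range, Sym2.eq_iff]
  constructor
  · rintro (rfl | rfl)
    exacts [⟨u, .inl ⟨rfl, rfl⟩⟩, ⟨v, .inr ⟨rfl, rfl⟩⟩]
  · rintro ⟨i, ⟨rfl, rfl⟩ | ⟨rfl, rfl⟩⟩
    exacts [.inl rfl, .inr rfl]

theorem injective_mk_self_add_one (hn : 3 ≤ n) :
    Function.Injective fun i : Fin n ↦ s(i, i + 1) := by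
  intro i j h
  rcases Sym2.eq_iff.1 h with ⟨h, -⟩ | ⟨rfl, h⟩
  · exact h
  · obtain ⟨n, rfl⟩ := Nat.exists_eq_add_of_le' hn
    rw [add_assoc, add_eq_left, Fin.ext_iff] at h
    simp [Fin.val_add, Nat.mod_eq_of_lt (show 2 < n + 3 by omega)] at h

theorem ncard_edgeSet_cycleGraph (hn : 3 ≤ n) : (cycleGraph n).edgeSet.ncard = n := by
  rw [edgeSet_cycleGraph (by omega), Set.ncard_range_of_injective (injective_mk_self_add_one hn),
    Nat.card_eq_fintype_card, Fintype.card_fin]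

theorem exists_walk_cycleGraph_edges_eq (hn : 2 ≤ n) (u : Fin n) (k : ℕ) :
    ∃ p : (cycleGraph n).Walk u (u + k),
      p.edges = (List.range k).map fun t : ℕ ↦ s(u + t, u + t + 1) := by
  induction k with
  | zero => exact ⟨Walk.nil.copy rfl (by simp), by simp⟩
  | succ k ih =>
    obtain ⟨p, hp⟩ := ih
    have hadj : (cycleGraph n).Adj (u + k) (u + k + 1) := (cycleGraph_adj_iff hn).2 (.inl rfl)
    refine ⟨(p.concat hadj).copy rfl (by push_cast; exact add_assoc _ _ _), ?_⟩
    simp [hp, List.range_succ]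

noncomputable def cycleColoring (n : ℕ) [NeZero n] : Sym2 (Fin n) → Fin ((n + 1) / 2) :=
  Function.extend (fun i : Fin n ↦ s(i, i + 1))
    (fun i ↦ ⟨i % ((n + 1) / 2), Nat.mod_lt _ (by have := NeZero.pos n; omega)⟩)
    fun _ ↦ ⟨0, by have := NeZero.pos n; omega⟩

theorem val_cycleColoring (hn : 3 ≤ n) (i : Fin n) :
    (cycleColoring n s(i, i + 1) : ℕ) = i % ((n + 1) / 2) := by
  rw [cycleColoring, (injective_mk_self_add_one hn).extend_apply]

theorem exists_walk_cycleGraph_nodup_map_cycleColoring (hn : 3 ≤ n) (u : Fin n) {k : ℕ}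
    (hk : k + (n + 1) / 2 ≤ n) :
    ∃ p : (cycleGraph n).Walk u (u + k), (p.edges.map (cycleColoring n)).Nodup := by
  obtain ⟨p, hp⟩ := exists_walk_cycleGraph_edges_eq (by omega) u k
  refine ⟨p, ?_⟩
  rw [hp, List.map_map]
  refine List.nodup_range.map_on fun t₁ ht₁ t₂ ht₂ h ↦
    Nat.injOn_add_mod_mod (by omega) hk u.isLt (by simpa using ht₁) (by simpa using ht₂) ?_
  simpa [val_cycleColoring hn, Fin.val_add, Nat.add_mod_mod] using congrArg Fin.val h

theorem isRainbowConnected_cycleGraph (hn : 3 ≤ n) :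
    IsRainbowConnected (cycleGraph n) ((n + 1) / 2) := by
  refine isRainbowConnected_iff_exists_walk.2 ⟨cycleColoring n, fun u v _ ↦ ?_⟩
  by_cases hK : (v - u).val + (n + 1) / 2 ≤ n
  · obtain ⟨p, hp⟩ := exists_walk_cycleGraph_nodup_map_cycleColoring hn u hK
    exact ⟨p.copy rfl (by simp), by simpa using hp⟩
  · obtain ⟨p, hp⟩ :=
      exists_walk_cycleGraph_nodup_map_cycleColoring hn v (k := n - (v - u).val) (by omega)
    have hvu : v + ((n - (v - u).val : ℕ) : Fin n) = u := by
      rw [Nat.cast_sub (v - u).isLt.le, Fin.natCast_self, Fin.cast_val_eq_self]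
      abel
    exact ⟨(p.copy rfl hvu).reverse, by simpa using hp⟩

end SimpleGraph

/-- For `n/2 ≤ d ≤ n - 2`, `t(n,d) = n`. -/
theorem t_eq_n (n d : ℕ) (h1 : n ≤ 2 * d) (h2 : d + 2 ≤ n) :
    minRainbowEdges n d = n := by
  have : NeZero n := ⟨by omega⟩
  have hcycle :
      n ∈ {m | ∃ G : SimpleGraph (Fin n), G.edgeSet.ncard = m ∧ IsRainbowConnected G d} :=
    ⟨cycleGraph n, ncard_edgeSet_cycleGraph (by omega),
      (isRainbowConnected_cycleGraph (by omega)).mono (by omega)⟩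
  refine le_antisymm (Nat.sInf_le hcycle) (le_csInf ⟨n, hcycle⟩ ?_)
  rintro _ ⟨G, rfl, hG⟩
  simpa [Nat.card_coe_set_eq] using hG.card_vert_le_card_edgeSet (by simpa using h2)
end

section
/- There exists N such that for every integer n ≥ N, t(n,2) ≥ n·log₂ n − 4n·log₂ log₂ n − 2n; equivalently, every 2-rainbow connected graph of sufficiently large order n has at least n·log₂ n − 4n·log₂ log₂ n − 2n edges. -/
open Finset Real

section Counting

variable {V : Type*} [Fintype V] [DecidableEq V]

lemma card_filter_forall_mem_eq_pow {β : Type*} [Fintype β] [DecidableEq β] (S : Finset V)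
    (σ : V → β) : #{f : V → β | ∀ w ∈ S, f w = σ w} = Fintype.card β ^ #Sᶜ := by
  have hpi : ({f : V → β | ∀ w ∈ S, f w = σ w} : Finset (V → β)) =
      Fintype.piFinset fun w => if w ∈ S then {σ w} else univ := by
    ext f
    simp only [mem_filter, mem_univ, true_and, Fintype.mem_piFinset]
    refine forall_congr' fun w => ?_
    split_ifs <;> simp [*]
  rw [hpi, Fintype.card_piFinset, prod_apply_ite]
  simp [filter_not, compl_eq_univ_sdiff]

lemma sum_inv_two_pow_card_le {ι : Type*} (L : Finset ι) (S : ι → Finset V)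
    (σ : ι → V → Fin 2) (B : ℕ)
    (hB : ∀ f : V → Fin 2, #{v ∈ L | ∀ w ∈ S v, f w = σ v w} ≤ B) :
    ∑ v ∈ L, (2⁻¹ : ℝ) ^ #(S v) ≤ B := by
  have hcount (v : ι) : (2 : ℝ) ^ Fintype.card V * 2⁻¹ ^ #(S v) =
      #{f : V → Fin 2 | ∀ w ∈ S v, f w = σ v w} := by
    rw [card_filter_forall_mem_eq_pow, card_compl, Fintype.card_fin, Nat.cast_pow,
      Nat.cast_ofNat, pow_sub₀ _ two_ne_zero (card_le_univ _), inv_pow]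
  have hdouble : ∑ v ∈ L, #{f : V → Fin 2 | ∀ w ∈ S v, f w = σ v w} =
      ∑ f : V → Fin 2, #{v ∈ L | ∀ w ∈ S v, f w = σ v w} :=
    sum_card_bipartiteAbove_eq_sum_card_bipartiteBelow
      fun v (f : V → Fin 2) => ∀ w ∈ S v, f w = σ v w
  -- double counting the pairs `(v, f)` such that `f` meets all constraints of `v`
  refine le_of_mul_le_mul_left ?_ (by positivity : (0 : ℝ) < 2 ^ Fintype.card V)
  calc (2 : ℝ) ^ Fintype.card V * ∑ v ∈ L, 2⁻¹ ^ #(S v)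
      = ∑ f : V → Fin 2, (#{v ∈ L | ∀ w ∈ S v, f w = σ v w} : ℝ) := by
        simp_rw [mul_sum, hcount]; exact_mod_cast hdouble
    _ ≤ ∑ _f : V → Fin 2, (B : ℝ) := sum_le_sum fun f _ => by exact_mod_cast hB f
    _ = 2 ^ Fintype.card V * B := by simp

end Counting

lemma card_mul_logb_le_sum {ι : Type*} (s : Finset ι) (a : ι → ℝ) {A : ℝ} (hA : 0 < A)
    (h : ∑ i ∈ s, (2⁻¹ : ℝ) ^ a i ≤ A) : #s * logb 2 (#s / A) ≤ ∑ i ∈ s, a i := by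
  rcases s.eq_empty_or_nonempty with rfl | hs
  · simp
  have hk : (0 : ℝ) < #s := by exact_mod_cast hs.card_pos
  have hjensen := (convexOn_rpow_left (b := 2⁻¹) (by norm_num)).map_sum_le
    (t := s) (w := fun _ => (#s : ℝ)⁻¹) (p := a) (fun _ _ => by positivity)
    (by simp [hk.ne']) (fun _ _ => Set.mem_univ _)
  simp only [smul_eq_mul, ← mul_sum] at hjensen
  have hmean : (2 : ℝ) ^ (-((#s : ℝ)⁻¹ * ∑ i ∈ s, a i)) ≤ A / #s := by
    rw [rpow_neg zero_le_two, ← inv_rpow zero_le_two, div_eq_inv_mul]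
    exact hjensen.trans (mul_le_mul_of_nonneg_left h (by positivity))
  rw [← le_logb_iff_rpow_le one_lt_two (by positivity), ← inv_div, logb_inv, neg_le_neg_iff,
    le_inv_mul_iff₀ hk] at hmean
  exact hmean

lemma logb_natCeil_sq_le {x : ℝ} (hx : 1 ≤ x) : logb 2 ⌈x ^ 2⌉₊ ≤ 1 + 2 * logb 2 x := by
  have hceil : (⌈x ^ 2⌉₊ : ℝ) < x ^ 2 + 1 := Nat.ceil_lt_add_one (by positivity)
  calc logb 2 ⌈x ^ 2⌉₊ ≤ logb 2 (2 * x ^ 2) :=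
        logb_le_logb_of_le one_lt_two (Nat.cast_pos.2 (Nat.ceil_pos.2 (by positivity)))
          (by nlinarith)
    _ = 1 + 2 * logb 2 x := by
        rw [logb_mul two_ne_zero (by positivity), logb_self_eq_one one_lt_two, logb_pow]
        push_cast
        ring

namespace SimpleGraph

def IsTwoStepRainbow {V α : Type*} (G : SimpleGraph V) (c : Sym2 V → α) : Prop :=
  ∀ u v, u ≠ v → G.Adj u v ∨ ∃ w, G.Adj u w ∧ G.Adj w v ∧ c s(u, w) ≠ c s(w, v)

end SimpleGraph

lemma isRainbowConnected_top {V : Type*} {k : ℕ} (hk : 0 < k) :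
    IsRainbowConnected (⊤ : SimpleGraph V) k :=
  ⟨fun _ => ⟨0, hk⟩, fun _ _ huv => ⟨.cons huv .nil, by simp [huv], by simp⟩⟩

lemma IsRainbowConnected.exists_isTwoStepRainbow {V : Type*} {G : SimpleGraph V}
    (h : IsRainbowConnected G 2) : ∃ c : Sym2 V → Fin 2, G.IsTwoStepRainbow c := by
  obtain ⟨c, hc⟩ := h
  refine ⟨c, fun u v huv => ?_⟩
  obtain ⟨p, -, hnodup⟩ := hc u v huv
  have hlen : p.length ≤ 2 := by simpa using hnodup.length_le_card
  -- longer paths are excluded by `hlen` in the pattern match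
  match p, hlen, hnodup with
  | .nil, _, _ => exact absurd rfl huv
  | .cons hadj .nil, _, _ => exact .inl hadj
  | .cons huw (.cons hwv .nil), _, hnodup => exact .inr ⟨_, huw, hwv, by simpa using hnodup⟩

namespace SimpleGraph

variable {V α : Type*} [Fintype V] {G : SimpleGraph V} [DecidableRel G.Adj]

lemma mul_card_le_card_edgeFinset (τ : ℕ) :
    τ * #{v | τ ≤ G.degree v} ≤ 2 * #G.edgeFinset := by
  rw [← sum_degrees_eq_twice_card_edges, mul_comm]
  calc _ ≤ ∑ v ∈ {v | τ ≤ G.degree v}, G.degree v :=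
        card_nsmul_le_sum _ _ _ fun v hv => (mem_filter.1 hv).2
    _ ≤ _ := sum_le_sum_of_subset (subset_univ _)

variable [DecidableEq V]

lemma sum_card_neighborFinset_inter_le (s t : Finset V) :
    ∑ v ∈ s, #(G.neighborFinset v ∩ t) ≤ ∑ w ∈ t, G.degree w := by
  have hcomm := sum_card_bipartiteAbove_eq_sum_card_bipartiteBelow G.Adj (s := s) (t := t)
  calc _ = ∑ v ∈ s, #(t.bipartiteAbove G.Adj v) := by
        congr! 2 with v; ext w; simp [bipartiteAbove, and_comm]
    _ ≤ ∑ w ∈ t, G.degree w := by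
        rw [hcomm]
        refine sum_le_sum fun w _ => ?_
        rw [← card_neighborFinset_eq_degree]
        refine card_le_card fun v hv => ?_
        simpa [bipartiteBelow, adj_comm] using (mem_filter.1 hv).2

section AnyColors

variable {c : Sym2 V → α}

lemma IsTwoStepRainbow.adj_or_exists_not_mem (hc : G.IsTwoStepRainbow c) {f : V → α}
    {X : Finset V} {u v : V} (huv : u ≠ v)
    (hu : ∀ w ∈ G.neighborFinset u ∩ X, f w = c s(u, w))
    (hv : ∀ w ∈ G.neighborFinset v ∩ X, f w = c s(v, w)) :
    G.Adj u v ∨ ∃ w ∉ X, G.Adj u w ∧ G.Adj w v := by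
  refine (hc u v huv).imp_right fun ⟨w, huw, hwv, hcol⟩ => ⟨w, fun hwX => hcol ?_, huw, hwv⟩
  rw [← hu w (by simpa [huw]), Sym2.eq_swap, ← hv w (by simpa [hwv.symm])]

variable [DecidableEq α]

lemma IsTwoStepRainbow.filter_agree_subset (hc : G.IsTwoStepRainbow c) (f : V → α)
    (X L : Finset V) {u : V}
    (hu : u ∈ {v ∈ L | ∀ w ∈ G.neighborFinset v ∩ X, f w = c s(v, w)}) :
    {v ∈ L | ∀ w ∈ G.neighborFinset v ∩ X, f w = c s(v, w)} ⊆
      insert u (G.neighborFinset u ∪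
        {w ∈ G.neighborFinset u | w ∉ X}.biUnion fun w => G.neighborFinset w) := by
  intro v hv
  rcases eq_or_ne v u with rfl | hvu
  · exact mem_insert_self _ _
  rw [mem_filter] at hu hv
  rcases hc.adj_or_exists_not_mem hvu.symm hu.2 hv.2 with hadj | ⟨w, hwX, huw, hwv⟩
  · simp [hadj]
  · simp only [mem_insert, mem_union, mem_biUnion, mem_filter, mem_neighborFinset]
    exact .inr (.inr ⟨w, ⟨huw, hwX⟩, hwv⟩)

lemma IsTwoStepRainbow.card_agree_le (hc : G.IsTwoStepRainbow c) (f : V → α) (τ : ℕ) :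
    #{v ∈ {v | G.degree v < τ} | ∀ w ∈ G.neighborFinset v, f w = c s(v, w)} ≤ τ := by
  rcases Finset.eq_empty_or_nonempty
    {v ∈ {v | G.degree v < τ} | ∀ w ∈ G.neighborFinset v, f w = c s(v, w)} with h | ⟨u, hu⟩
  · rw [h, card_empty]; exact Nat.zero_le _
  have hsub := hc.filter_agree_subset f univ {v | G.degree v < τ} (u := u) (by simpa using hu)
  simp only [inter_univ, mem_univ, not_true_eq_false, filter_false, biUnion_empty,
    union_empty] at hsub
  have hdeg : G.degree u < τ := by simpa using (mem_filter.1 hu).1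
  calc _ ≤ #(insert u (G.neighborFinset u)) := card_le_card hsub
    _ ≤ G.degree u + 1 := card_insert_le _ _
    _ ≤ τ := hdeg

lemma IsTwoStepRainbow.card_agree_high_le (hc : G.IsTwoStepRainbow c) (f : V → α) (τ : ℕ) :
    #{v ∈ {v | G.degree v < τ} |
      ∀ w ∈ G.neighborFinset v ∩ ({w | τ ≤ G.degree w} : Finset V), f w = c s(v, w)} ≤
      τ ^ 2 := by
  rcases Finset.eq_empty_or_nonempty {v ∈ {v | G.degree v < τ} |
      ∀ w ∈ G.neighborFinset v ∩ ({w | τ ≤ G.degree w} : Finset V), f w = c s(v, w)} with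
    h | ⟨u, hu⟩
  · rw [h, card_empty]; exact Nat.zero_le _
  have hsub := hc.filter_agree_subset f _ _ hu
  have hdeg : G.degree u < τ := by simpa using (mem_filter.1 hu).1
  have hbiUnion : #({w ∈ G.neighborFinset u | w ∉ ({w | τ ≤ G.degree w} : Finset V)}.biUnion
      fun w => G.neighborFinset w) ≤ G.degree u * (τ - 1) := by
    refine (card_biUnion_le_card_mul _ _ (τ - 1) fun w hw => ?_).trans <|
      Nat.mul_le_mul_right _ <| (card_filter_le _ _).trans_eq (card_neighborFinset_eq_degree _ _)
    simp only [mem_filter, mem_univ, true_and, not_le] at hw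
    rw [card_neighborFinset_eq_degree]
    omega
  calc _ ≤ _ := card_le_card hsub
    _ ≤ G.degree u + G.degree u * (τ - 1) + 1 :=
      (card_insert_le _ _).trans (by grw [card_union_le, card_neighborFinset_eq_degree, hbiUnion])
    _ ≤ τ ^ 2 := by
      obtain ⟨d, rfl⟩ := Nat.exists_eq_add_of_lt hdeg
      simp only [Nat.add_sub_cancel]
      nlinarith

end AnyColors

variable {c : Sym2 V → Fin 2}

lemma IsTwoStepRainbow.card_mul_logb_le_sum_degree (hc : G.IsTwoStepRainbow c) {τ : ℕ}
    (hτ : 0 < τ) :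
    (#{v | G.degree v < τ} : ℝ) * logb 2 (#{v | G.degree v < τ} / τ) ≤
      ∑ v ∈ {v | G.degree v < τ}, (G.degree v : ℝ) := by
  refine card_mul_logb_le_sum _ _ (by exact_mod_cast hτ) ?_
  simpa [rpow_natCast, card_neighborFinset_eq_degree] using sum_inv_two_pow_card_le _
    (fun v => G.neighborFinset v) (fun v w => c s(v, w)) τ (hc.card_agree_le · τ)

lemma IsTwoStepRainbow.card_mul_logb_le_sum_degree_high (hc : G.IsTwoStepRainbow c) {τ : ℕ}
    (hτ : 0 < τ) :
    (#{v | G.degree v < τ} : ℝ) * logb 2 (#{v | G.degree v < τ} / τ ^ 2) ≤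
      ∑ w ∈ {w | τ ≤ G.degree w}, (G.degree w : ℝ) := by
  have hcount := sum_inv_two_pow_card_le {v | G.degree v < τ}
    (fun v => G.neighborFinset v ∩ ({w | τ ≤ G.degree w} : Finset V)) (fun v w => c s(v, w))
    (τ ^ 2) (hc.card_agree_high_le · τ)
  have hsum := card_mul_logb_le_sum {v | G.degree v < τ}
    (fun v => (#(G.neighborFinset v ∩ ({w | τ ≤ G.degree w} : Finset V)) : ℝ))
    (A := ((τ ^ 2 : ℕ) : ℝ)) (by positivity) (by simpa [rpow_natCast] using hcount)
  push_cast at hsum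
  exact hsum.trans (by exact_mod_cast sum_card_neighborFinset_inter_le _ _)

lemma IsTwoStepRainbow.card_mul_le_card_edgeFinset (hc : G.IsTwoStepRainbow c) {τ : ℕ}
    (hτ : 0 < τ) :
    (#{v | G.degree v < τ} : ℝ) * (2 * logb 2 #{v | G.degree v < τ} - 3 * logb 2 τ) ≤
      2 * #G.edgeFinset := by
  set s : ℝ := ((#{v | G.degree v < τ} : ℕ) : ℝ)
  have hsplit : ∑ v ∈ {v | G.degree v < τ}, (G.degree v : ℝ) +
      ∑ w ∈ {w | τ ≤ G.degree w}, (G.degree w : ℝ) = 2 * #G.edgeFinset := by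
    have := sum_filter_add_sum_filter_not univ (fun v => G.degree v < τ) fun v => (G.degree v : ℝ)
    simp only [not_lt] at this
    rw [this]
    exact_mod_cast sum_degrees_eq_twice_card_edges G
  rcases eq_or_ne s 0 with hs | hs
  · rw [hs, zero_mul]; positivity
  have hτ' : (τ : ℝ) ≠ 0 := by exact_mod_cast hτ.ne'
  have hlow := hc.card_mul_logb_le_sum_degree hτ
  have hhigh := hc.card_mul_logb_le_sum_degree_high hτ
  rw [logb_div hs hτ'] at hlow
  rw [logb_div hs (pow_ne_zero 2 hτ'), logb_pow] at hhigh
  push_cast at hhigh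
  linarith

theorem IsTwoStepRainbow.card_edgeFinset_ge (hc : G.IsTwoStepRainbow c)
    (hV : 256 ≤ Fintype.card V) :
    (Fintype.card V : ℝ) * logb 2 (Fintype.card V) -
        4 * Fintype.card V * logb 2 (logb 2 (Fintype.card V)) - 2 * Fintype.card V ≤
      #G.edgeFinset := by
  set n : ℝ := ((Fintype.card V : ℕ) : ℝ)
  set ℓ := logb 2 n
  set m : ℝ := ((#G.edgeFinset : ℕ) : ℝ)
  have hn : 256 ≤ n := by simp only [n]; exact_mod_cast hV
  have hℓ : 8 ≤ ℓ := (le_logb_iff_rpow_le one_lt_two (by positivity)).2 (by norm_num; exact hn)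
  have hLg : 3 ≤ logb 2 ℓ :=
    (le_logb_iff_rpow_le one_lt_two (by positivity)).2 (by norm_num; exact hℓ)
  rcases le_or_gt (n * ℓ) m with hm | hm
  · nlinarith
  set τ := ⌈ℓ ^ 2⌉₊
  have hτ : ℓ ^ 2 ≤ τ := Nat.le_ceil _
  have hτpos : 0 < τ := Nat.ceil_pos.2 (by positivity)
  set s : ℝ := ((#{v | G.degree v < τ} : ℕ) : ℝ)
  set h : ℝ := ((#{v | τ ≤ G.degree v} : ℕ) : ℝ)
  have hlow : s * (2 * logb 2 s - 3 * logb 2 τ) ≤ 2 * m :=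
    hc.card_mul_le_card_edgeFinset hτpos
  have hhigh : τ * h ≤ 2 * m := by
    simp only [h, m]; exact_mod_cast mul_card_le_card_edgeFinset (G := G) τ
  have hsh : s + h = n := by
    have := card_filter_add_card_filter_not (s := univ) fun v => G.degree v < τ
    simp only [not_lt, card_univ] at this
    simp only [s, h, n]; exact_mod_cast this
  have hh : 0 ≤ h := by positivity
  have hhℓ : h * ℓ ≤ 2 * n := by nlinarith
  have hs : n / 2 ≤ s := by nlinarith
  have hlogs : ℓ - 1 ≤ logb 2 s := by
    calc ℓ - 1 = logb 2 (n / 2) := by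
          rw [logb_div (by positivity) two_ne_zero, logb_self_eq_one one_lt_two]
      _ ≤ logb 2 s := logb_le_logb_of_le one_lt_two (by positivity) hs
  have hlogτ : logb 2 τ ≤ 1 + 2 * logb 2 ℓ := logb_natCeil_sq_le (by linarith)
  have hB : s * (2 * ℓ - 5 - 6 * logb 2 ℓ) ≤ s * (2 * logb 2 s - 3 * logb 2 τ) :=
    mul_le_mul_of_nonneg_left (by linarith) (by positivity)
  have hhB : h * (2 * ℓ - 5 - 6 * logb 2 ℓ) ≤ h * (2 * ℓ) :=
    mul_le_mul_of_nonneg_left (by linarith) hh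
  have hsplit : s * (2 * ℓ - 5 - 6 * logb 2 ℓ) =
      n * (2 * ℓ - 5 - 6 * logb 2 ℓ) - h * (2 * ℓ - 5 - 6 * logb 2 ℓ) := by
    rw [← hsh]; ring
  linarith [mul_le_mul_of_nonneg_left hLg (by positivity : (0 : ℝ) ≤ n)]

end SimpleGraph

/-- For sufficiently large `n`, `t(n,2) ≥ n log₂ n - 4 n log₂ log₂ n - 2n`. -/
theorem t_n_two_lower : ∃ N : ℕ, ∀ n : ℕ, N ≤ n →
    (n : ℝ) * Real.logb 2 n - 4 * (n : ℝ) * Real.logb 2 (Real.logb 2 n) - 2 * (n : ℝ) ≤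
      (minRainbowEdges n 2 : ℝ) := by
  refine ⟨256, fun n hn => ?_⟩
  obtain ⟨G, hG, hrc⟩ : minRainbowEdges n 2 ∈
      {m | ∃ G : SimpleGraph (Fin n), G.edgeSet.ncard = m ∧ IsRainbowConnected G 2} :=
    Nat.sInf_mem ⟨_, ⊤, rfl, isRainbowConnected_top two_pos⟩
  obtain ⟨c, hc⟩ := hrc.exists_isTwoStepRainbow
  classical
  rw [← hG, ← SimpleGraph.coe_edgeFinset, Set.ncard_coe_finset]
  simpa using hc.card_edgeFinset_ge (by simpa using hn)
end

section
/- Let G be a connected graph and let G′ be the graph obtained from G by deleting all of its bridges. If x and y are two vertices lying in the same connected component C of G′, then the distance between x and y within C equals their distance in G; in particular, the diameter of every component of G′ is at most the diameter of G. -/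
/-!
Let `G'` be `G` with some bridges deleted. A path `p` in `G` between vertices `x`, `y` joined in
`G'` uses none of these bridges: if its first edge `xz` were one, the rest of `p`, which avoids `x`,
would join `z` to `y` in `G - xz`, while `x` is joined to `y` in `G' ≤ G - xz`, so `xz` would not
be a bridge; then continue along `p` from `z`. Applied to a shortest path, this shows that
distances in `G'` agree with those in `G`, and hence so do the distances inside a component of `G'`.
-/

namespace SimpleGraph

variable {V : Type*} {G : SimpleGraph V} {S : Set (Sym2 V)} {x y : V}

theorem Walk.IsPath.forall_notMem_of_reachable_deleteEdges (hS : ∀ e ∈ S, G.IsBridge e)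
    {p : G.Walk x y} (hp : p.IsPath) (hxy : (G.deleteEdges S).Reachable x y) :
    ∀ e ∈ p.edges, e ∉ S := by
  induction p with
  | nil => simp
  | @cons x z y hxz q ih =>
    rw [Walk.cons_isPath_iff] at hp
    have hxz_notMem : s(x, z) ∉ S := by
      intro hxzS
      have hqe : s(x, z) ∉ q.edges := fun he ↦ hp.2 (q.fst_mem_support_of_mem_edges he)
      have hzy : (G.deleteEdges {s(x, z)}).Reachable z y :=
        reachable_deleteEdges_iff_exists_walk.mpr ⟨q, hqe⟩
      have hxy' : (G.deleteEdges {s(x, z)}).Reachable x y :=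
        hxy.mono (deleteEdges_anti (Set.singleton_subset_iff.mpr hxzS))
      exact isBridge_iff.mp (hS _ hxzS) (hxy'.trans hzy.symm)
    have hxz' : (G.deleteEdges S).Adj x z := (deleteEdges_adj).mpr ⟨hxz, hxz_notMem⟩
    rw [Walk.edges_cons, List.forall_mem_cons]
    exact ⟨hxz_notMem, ih hp.1 (hxz'.reachable.symm.trans hxy)⟩

theorem edist_deleteEdges_eq_of_forall_isBridge (hS : ∀ e ∈ S, G.IsBridge e)
    (hxy : (G.deleteEdges S).Reachable x y) : (G.deleteEdges S).edist x y = G.edist x y := by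
  refine le_antisymm ?_ (edist_anti (deleteEdges_le S))
  have hxy_G : G.Reachable x y := hxy.mono (deleteEdges_le S)
  obtain ⟨p, hp, hlen⟩ := hxy_G.exists_path_of_dist
  calc (G.deleteEdges S).edist x y
      ≤ (p.toDeleteEdges S (hp.forall_notMem_of_reachable_deleteEdges hS hxy)).length :=
        edist_le _
    _ = G.edist x y := by rw [Walk.length_transfer, hlen, hxy_G.coe_dist_eq_edist]

theorem dist_deleteEdges_eq_of_forall_isBridge (hS : ∀ e ∈ S, G.IsBridge e)
    (hxy : (G.deleteEdges S).Reachable x y) : (G.deleteEdges S).dist x y = G.dist x y :=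
  congrArg ENat.toNat (edist_deleteEdges_eq_of_forall_isBridge hS hxy)

theorem ConnectedComponent.edist_induce_supp (C : G.ConnectedComponent) (hx : x ∈ C.supp)
    (hy : y ∈ C.supp) : (G.induce C.supp).edist ⟨x, hx⟩ ⟨y, hy⟩ = G.edist x y := by
  classical
  refine le_antisymm ?_ ?_
  · obtain ⟨p, hp⟩ := (C.reachable_of_mem_supp hx hy).exists_walk_length_eq_edist
    have hsupp : ∀ w ∈ p.support, w ∈ C.supp := fun w hw ↦
      (ConnectedComponent.sound (p.takeUntil w hw).reachable).symm.trans hx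
    have hlen := congrArg Walk.length (p.map_induce hsupp)
    rw [Walk.length_map] at hlen
    calc (G.induce C.supp).edist ⟨x, hx⟩ ⟨y, hy⟩ ≤ (p.induce C.supp hsupp).length := edist_le _
      _ = G.edist x y := by rw [hlen]; exact hp
  · have hxy : (G.induce C.supp).Reachable ⟨x, hx⟩ ⟨y, hy⟩ := C.reachable_toSimpleGraph hx hy
    obtain ⟨q, hq⟩ := hxy.exists_walk_length_eq_edist
    calc G.edist x y ≤ (q.map (Embedding.induce C.supp).toHom).length := edist_le _
      _ = _ := by rw [Walk.length_map, hq]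

theorem ediam_induce_supp_deleteEdges_le (hS : ∀ e ∈ S, G.IsBridge e)
    (C : (G.deleteEdges S).ConnectedComponent) :
    ((G.deleteEdges S).induce C.supp).ediam ≤ G.ediam :=
  ediam_le_of_edist_le fun ⟨u, hu⟩ ⟨v, hv⟩ ↦ by
    rw [C.edist_induce_supp hu hv,
      edist_deleteEdges_eq_of_forall_isBridge hS (C.reachable_of_mem_supp hu hv)]
    exact edist_le_ediam

end SimpleGraph

open SimpleGraph in
/-- Let `G'` be the graph obtained from a connected graph `G` by deleting all bridges.
If `x` and `y` lie in the same connected component of `G'`, then their distance within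
that component (equivalently, in `G'`) equals their distance in `G`; in particular the
diameter of every component of `G'` is at most the diameter of `G`. -/
theorem dist_eq_after_deleting_bridges {V : Type*} [Fintype V] (G : SimpleGraph V)
    (hG : G.Connected) :
    (∀ x y : V,
      (G.deleteEdges {e | G.IsBridge e}).connectedComponentMk x =
        (G.deleteEdges {e | G.IsBridge e}).connectedComponentMk y →
      (G.deleteEdges {e | G.IsBridge e}).dist x y = G.dist x y) ∧
    (∀ C : (G.deleteEdges {e | G.IsBridge e}).ConnectedComponent,
      ((G.deleteEdges {e | G.IsBridge e}).induce C.supp).diam ≤ G.diam) := by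
  have hS : ∀ e ∈ {e | G.IsBridge e}, G.IsBridge e := fun _ he ↦ he
  have : Nonempty V := hG.nonempty
  exact ⟨fun x y hxy ↦ dist_deleteEdges_eq_of_forall_isBridge hS (ConnectedComponent.exact hxy),
    fun C ↦ ENat.toNat_le_toNat (ediam_induce_supp_deleteEdges_le hS C)
      (connected_iff_ediam_ne_top.mp hG)⟩
end
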